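/- Suppose x̂ : C satisfies p(x̂) > 1/2, and let ŝ : S be any maximizer of q (i.e., q(ŝ) ≥ q(s) for all s : S). Then ŝ = f(x̂), and x̂ is the strict unique maximizer of p among codewords with starting state ŝ: for every x ≠ x̂ with f(x) = ŝ, p(x) < p(x̂). (Consequence of the paper's Theorem 1: two-phase decoding — first selecting the MAP starting state by TB SEA, then the MAP codeword with that starting state by ROVA(ŝ) — yields the overall MAP tail-biting codeword whenever the word-error probability is below 1/2.) -/
import Mathlib


/-- Consequence of the paper's Theorem 1: two-phase decoding (MAP starting state, then
MAP codeword with that starting state) yields the overall MAP tail-biting codeword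
whenever the word-error probability is below `1/2`. -/
theorem two_phase_decoding_yields_map_codeword
    {C S : Type*} [Fintype C] [Nonempty C] [Fintype S] [DecidableEq S]
    (f : C → S) (p : C → ℝ) (q : S → ℝ)
    (hp : ∀ x, 0 ≤ p x) (hsum : ∑ x, p x = 1)
    (hq : ∀ s, q s = ∑ x ∈ Finset.univ.filter (fun x => f x = s), p x)
    (xhat : C) (hx : p xhat > 1 / 2)
    (shat : S) (hshat : ∀ s : S, q shat ≥ q s) :
    shat = f xhat ∧ ∀ x : C, x ≠ xhat → f x = shat → p x < p xhat := by
  classical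
  have hqsum : ∑ s, q s = 1 := by
    simp only [hq]
    exact Finset.sum_fiberwise_of_maps_to (fun x _ => Finset.mem_univ (f x)) p ▸ hsum
  have hqf : q (f xhat) ≥ p xhat := by
    rw [hq]
    exact Finset.single_le_sum (fun x _ => hp x)
      (Finset.mem_filter.mpr ⟨Finset.mem_univ _, rfl⟩)
  have hqnn : ∀ s, 0 ≤ q s := fun s => by
    rw [hq]; exact Finset.sum_nonneg fun x _ => hp x
  have hshat_eq : shat = f xhat := by
    by_contra hne
    have h2 : q shat + q (f xhat) ≤ ∑ s, q s := by
      have := Finset.sum_pair hne (f := q)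
      rw [← this]
      exact Finset.sum_le_sum_of_subset_of_nonneg (Finset.subset_univ _)
        (fun s _ _ => hqnn s)
    have hs1 : q shat ≥ q (f xhat) := hshat (f xhat)
    nlinarith [hshat (f xhat)]
  refine ⟨hshat_eq, fun x hxne _ => ?_⟩
  have : p x + p xhat ≤ ∑ y, p y := by
    rw [← Finset.sum_pair hxne]
    exact Finset.sum_le_sum_of_subset_of_nonneg (Finset.subset_univ _)
      (fun y _ _ => hp y)
  linarith
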